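/- Let (A_j)_{j ∈ J} be a family of topological abelian groups, P = ∏_{j ∈ J} A_j with the Tychonov topology and canonical embeddings τ_j : A_j → P, and let H be a Hausdorff topological abelian group. If ω, ω' : P → H are continuous group homomorphisms satisfying ω ∘ τ_j = ω' ∘ τ_j for every j ∈ J, then ω = ω'. -/

import Mathlib

/-!
In the Tychonov topology every `x` is the unconditional product `∏ j, τ_j (x j)`, since each
coordinate of the partial products is eventually constant. Continuous homomorphisms preserve such
products, so `ω x` and `ω' x` are limits of the same net in the Hausdorff group `H`.
-/

open Filter

theorem Pi.hasProd_mulSingle {J : Type*} [DecidableEq J] {A : J → Type*}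
    [∀ j, CommMonoid (A j)] [∀ j, TopologicalSpace (A j)] (x : ∀ j, A j) :
    HasProd (fun j ↦ Pi.mulSingle j (x j)) x := by
  refine Pi.hasProd.2 fun k ↦ tendsto_nhds_of_eventually_eq ?_
  filter_upwards [eventually_ge_atTop {k}] with s hs
  rw [Finset.prod_pi_mulSingle, if_pos (Finset.singleton_subset_iff.1 hs)]

theorem eq_of_comp_mulSingle_eq_general {J : Type*} [DecidableEq J] (A : J → Type*)
    [∀ j, CommGroup (A j)] [∀ j, TopologicalSpace (A j)]
    {H : Type*} [CommGroup H] [TopologicalSpace H] [T2Space H]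
    (ω ω' : (∀ j, A j) →* H) (hω : Continuous ω) (hω' : Continuous ω')
    (h : ∀ (j : J) (a : A j), ω (Pi.mulSingle j a) = ω' (Pi.mulSingle j a)) :
    ω = ω' := by
  ext x
  have hx := Pi.hasProd_mulSingle x
  refine (hx.map ω hω).unique ?_
  simpa only [Function.comp_def, h] using hx.map ω' hω'

/-- Two continuous homomorphisms from a Cartesian product of topological abelian
groups (with the Tychonov topology) into a Hausdorff topological abelian group
that agree on each canonical embedding `τ_j : A_j → ∏_k A_k` are equal. -/
theorem eq_of_comp_mulSingle_eq {J : Type*} [DecidableEq J] (A : J → Type*)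
    [∀ j, CommGroup (A j)] [∀ j, TopologicalSpace (A j)] [∀ j, IsTopologicalGroup (A j)]
    {H : Type*} [CommGroup H] [TopologicalSpace H] [IsTopologicalGroup H] [T2Space H]
    (ω ω' : (∀ j, A j) →* H) (hω : Continuous ω) (hω' : Continuous ω')
    (h : ∀ (j : J) (a : A j), ω (Pi.mulSingle j a) = ω' (Pi.mulSingle j a)) :
    ω = ω' :=
  eq_of_comp_mulSingle_eq_general A ω ω' hω hω' h
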